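/- Sufficient condition for exponentially bounded flow: if Δ(t) = −(1/c)G(t) + (1/c)Ḡ where G(t) is diagonal with entries ≥ g_L > 0 and Ḡ is symmetric with largest eigenvalue σ₁ satisfying σ₁ < g_L, then the flow Γ(s,t) of V' = Δ(t)V satisfies ‖Γ(s,t)‖ ≤ M e^{−m(t−s)} for some m > 0 (namely m = (g_L − σ₁)/c) and all s ≤ t. -/

import Mathlib

/-!
With `m = (g_L - σ₁)/c`, the quadratic form of `Δ(t) = (Ḡ - G(t))/c` is at most `-m‖w‖²`, because
`⟪w, Ḡ w⟫ ≤ ‖Ḡ‖ ‖w‖²` and `⟪w, G(t) w⟫ ≥ g_L ‖w‖²` for the diagonal `G(t)`. Along every trajectory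
`v(t) = Γ(s,t) v₀` the Lyapunov function `e^{2mt} ‖v(t)‖²` is therefore nonincreasing, which gives
`‖Γ(s,t)‖ ≤ e^{-m(t-s)}`, i.e. the bound with `M = 1`.
-/

open Real RealInnerProductSpace

section Dissipative

variable {E : Type*} [NormedAddCommGroup E] [InnerProductSpace ℝ E]

theorem norm_le_exp_mul_norm_of_inner_deriv_le {u u' : ℝ → E} {m s t : ℝ}
    (hu : ∀ r, HasDerivAt u (u' r) r) (hdiss : ∀ r, ⟪u r, u' r⟫ ≤ -m * ‖u r‖ ^ 2)
    (hst : s ≤ t) : ‖u t‖ ≤ exp (-m * (t - s)) * ‖u s‖ := by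
  have hφ : ∀ r, HasDerivAt (fun r => exp (2 * m * r) * ‖u r‖ ^ 2)
      (2 * m * exp (2 * m * r) * ‖u r‖ ^ 2 + exp (2 * m * r) * (2 * ⟪u r, u' r⟫)) r := by
    intro r
    have hexp : HasDerivAt (fun r => exp (2 * m * r)) (2 * m * exp (2 * m * r)) r := by
      simpa [mul_comm] using ((hasDerivAt_id r).const_mul (2 * m)).exp
    exact hexp.mul (hu r).norm_sq
  have hanti : Antitone fun r => exp (2 * m * r) * ‖u r‖ ^ 2 := by
    refine antitone_of_deriv_nonpos (fun r => (hφ r).differentiableAt) fun r => ?_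
    rw [(hφ r).deriv]
    nlinarith [hdiss r, exp_pos (2 * m * r)]
  have hsq : ‖u t‖ ^ 2 ≤ (exp (-m * (t - s)) * ‖u s‖) ^ 2 := by
    have hexp : exp (-m * (t - s)) ^ 2 * exp (2 * m * t) = exp (2 * m * s) := by
      rw [← exp_nat_mul, ← exp_add]; ring_nf
    have hmono := hanti hst
    rw [mul_pow, ← mul_le_mul_iff_of_pos_left (exp_pos (2 * m * t))]
    nlinarith
  exact (pow_le_pow_iff_left₀ (norm_nonneg _) (by positivity) two_ne_zero).mp hsq

theorem opNorm_le_exp_of_hasDerivAt_mul_of_inner_apply_le {A Γ : ℝ → E →L[ℝ] E} {m s t : ℝ}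
    (hΓ : ∀ r, HasDerivAt Γ (A r * Γ r) r) (hΓs : Γ s = 1)
    (hdiss : ∀ r w, ⟪w, A r w⟫ ≤ -m * ‖w‖ ^ 2) (hst : s ≤ t) :
    ‖Γ t‖ ≤ exp (-m * (t - s)) := by
  refine ContinuousLinearMap.opNorm_le_bound _ (exp_pos _).le fun v => ?_
  have hu : ∀ r, HasDerivAt (Γ · v) (A r (Γ r v)) r := fun r => by
    simpa using (hΓ r).clm_apply (hasDerivAt_const r v)
  simpa [hΓs] using
    norm_le_exp_mul_norm_of_inner_deriv_le hu (fun r => hdiss r (Γ r v)) hst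

theorem inner_apply_self_le_opNorm_mul (T : E →L[ℝ] E) (w : E) :
    ⟪w, T w⟫ ≤ ‖T‖ * ‖w‖ ^ 2 :=
  calc ⟪w, T w⟫ ≤ ‖w‖ * ‖T w‖ := real_inner_le_norm _ _
    _ ≤ ‖w‖ * (‖T‖ * ‖w‖) := by gcongr; exact T.le_opNorm w
    _ = ‖T‖ * ‖w‖ ^ 2 := by ring

end Dissipative

theorem mul_norm_sq_le_inner_apply_of_diagonal {ι : Type*} [Fintype ι]
    {D : EuclideanSpace ℝ ι →L[ℝ] EuclideanSpace ℝ ι} {d : ι → ℝ} {a : ℝ}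
    (hD : ∀ v k, D v k = d k * v k) (hd : ∀ k, a ≤ d k) (w : EuclideanSpace ℝ ι) :
    a * ‖w‖ ^ 2 ≤ ⟪w, D w⟫ := by
  rw [EuclideanSpace.norm_sq_eq, PiLp.inner_apply, Finset.mul_sum]
  refine Finset.sum_le_sum fun k _ => ?_
  simp only [hD, RCLike.inner_apply, conj_trivial, Real.norm_eq_abs, sq_abs]
  nlinarith [hd k, sq_nonneg (w k)]

theorem stmt6_general (N : ℕ) (c gL σ1 : ℝ) (hc : 0 < c)
    (g : Fin N → ℝ → ℝ) (hg : ∀ k t, gL ≤ g k t)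
    (G : ℝ → (EuclideanSpace ℝ (Fin N) →L[ℝ] EuclideanSpace ℝ (Fin N)))
    (hGdiag : ∀ t, ∀ v : EuclideanSpace ℝ (Fin N), ∀ k : Fin N,
      (G t v) k = g k t * v k)
    (Gbar : EuclideanSpace ℝ (Fin N) →L[ℝ] EuclideanSpace ℝ (Fin N))
    (hσ1 : ‖Gbar‖ = σ1) (hlt : σ1 < gL)
    (Γ : ℝ → ℝ → (EuclideanSpace ℝ (Fin N) →L[ℝ] EuclideanSpace ℝ (Fin N)))
    (hΓ0 : ∀ s, Γ s s = 1)
    (hΓ : ∀ s t : ℝ,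
      HasDerivAt (fun u => Γ s u) (((1 / c) • (Gbar - G t)) * Γ s t) t) :
    ∃ M : ℝ, 0 < M ∧ 0 < (gL - σ1) / c ∧
      ∀ s t : ℝ, s ≤ t →
        ‖Γ s t‖ ≤ M * Real.exp (-((gL - σ1) / c) * (t - s)) := by
  have hdiss : ∀ r w, ⟪w, ((1 / c) • (Gbar - G r)) w⟫ ≤ -((gL - σ1) / c) * ‖w‖ ^ 2 := by
    intro r w
    have hGbar := hσ1 ▸ inner_apply_self_le_opNorm_mul Gbar w
    have hG := mul_norm_sq_le_inner_apply_of_diagonal (hGdiag r) (hg · r) w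
    rw [smul_apply, sub_apply, real_inner_smul_right, inner_sub_right]
    calc 1 / c * (⟪w, Gbar w⟫ - ⟪w, G r w⟫) ≤ 1 / c * ((σ1 - gL) * ‖w‖ ^ 2) := by
          gcongr; linarith
      _ = -((gL - σ1) / c) * ‖w‖ ^ 2 := by ring
  refine ⟨1, one_pos, div_pos (by linarith) hc, fun s t hst => ?_⟩
  rw [one_mul]
  exact opNorm_le_exp_of_hasDerivAt_mul_of_inner_apply_le (hΓ s) (hΓ0 s) hdiss hst

/-- sufficient condition for exponentially bounded flow: if
`Δ(t) = −(1/c)G(t) + (1/c)Ḡ` where `G(t)` is diagonal with entries `≥ g_L > 0`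
and `Ḡ` is symmetric with operator norm (largest eigenvalue) `σ₁ < g_L`, then
the flow `Γ(s,t)` of `V' = Δ(t)V` satisfies `‖Γ(s,t)‖ ≤ M e^{−m(t−s)}` with
`m = (g_L − σ₁)/c > 0`, for all `s ≤ t`. -/
theorem stmt6 (N : ℕ) (c gL σ1 : ℝ) (hc : 0 < c) (hgL : 0 < gL)
    (g : Fin N → ℝ → ℝ) (hgc : ∀ k, Continuous (g k)) (hg : ∀ k t, gL ≤ g k t)
    (G : ℝ → (EuclideanSpace ℝ (Fin N) →L[ℝ] EuclideanSpace ℝ (Fin N)))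
    (hGdiag : ∀ t, ∀ v : EuclideanSpace ℝ (Fin N), ∀ k : Fin N,
      (G t v) k = g k t * v k)
    (Gbar : EuclideanSpace ℝ (Fin N) →L[ℝ] EuclideanSpace ℝ (Fin N))
    (hGbarSym : IsSelfAdjoint Gbar) (hσ1 : ‖Gbar‖ = σ1) (hlt : σ1 < gL)
    (Γ : ℝ → ℝ → (EuclideanSpace ℝ (Fin N) →L[ℝ] EuclideanSpace ℝ (Fin N)))
    (hΓ0 : ∀ s, Γ s s = 1)
    (hΓ : ∀ s t : ℝ,
      HasDerivAt (fun u => Γ s u) (((1 / c) • (Gbar - G t)) * Γ s t) t) :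
    ∃ M : ℝ, 0 < M ∧ 0 < (gL - σ1) / c ∧
      ∀ s t : ℝ, s ≤ t →
        ‖Γ s t‖ ≤ M * Real.exp (-((gL - σ1) / c) * (t - s)) :=
  stmt6_general N c gL σ1 hc g hg G hGdiag Gbar hσ1 hlt Γ hΓ0 hΓ
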